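/- For every positive integer n and every real number α, the n×n Hankel determinant det(α·m_{i+j+1} + m_{i+j+2})_{i,j=0}^{n−1} equals (Σ_{j=0}^{n} f_j(α)·f_j(0)·∏_{ℓ=j}^{n−1} t_ℓ) · det(m_{i+j})_{i,j=0}^{n−1}. -/
import Mathlib


/-- `motzkinGF s t n k` is the weighted Motzkin path generating function `m(n,k)`:
`m(0,k) = [k = 0]`, `m(n,k) = 0` for `k < 0`, and
`m(n,k) = m(n-1,k-1) + s_k m(n-1,k) + t_k m(n-1,k+1)` for `n ≥ 1`, `k ≥ 0`. -/
def motzkinGF (s t : ℕ → ℝ) : ℕ → ℤ → ℝ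
  | 0, k => if k = 0 then 1 else 0
  | n+1, k =>
      if k < 0 then 0
      else motzkinGF s t n (k-1) + s k.toNat * motzkinGF s t n k
             + t k.toNat * motzkinGF s t n (k+1)

/-- The polynomials `f_n(α)`: `f_0 = 1`, `f_1 = α + s_0`, and
`f_n(α) = (α + s_{n-1}) f_{n-1}(α) - t_{n-2} f_{n-2}(α)` for `n ≥ 2`. -/
def fpoly (s t : ℕ → ℝ) (α : ℝ) : ℕ → ℝ
  | 0 => 1
  | 1 => α + s 0
  | n+2 => (α + s (n+1)) * fpoly s t α (n+1) - t n * fpoly s t α n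


open Finset

namespace HA
variable (s t : ℕ → ℝ)

lemma m_neg (n : ℕ) (k : ℤ) (hk : k < 0) : motzkinGF s t n k = 0 := by
  cases n with
  | zero => simp [motzkinGF]; omega
  | succ n => simp [motzkinGF, hk]

lemma m_succ (n : ℕ) (k : ℕ) :
    motzkinGF s t (n+1) k = motzkinGF s t n ((k:ℤ)-1) + s k * motzkinGF s t n k
      + t k * motzkinGF s t n ((k:ℤ)+1) := by
  simp [motzkinGF]

lemma m_high (n : ℕ) (k : ℤ) (hk : (n:ℤ) < k) : motzkinGF s t n k = 0 := by
  induction n generalizing k with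
  | zero => simp [motzkinGF]; omega
  | succ n ih =>
    have h0 : ¬ (k < 0) := by omega
    simp only [motzkinGF, if_neg h0]
    rw [ih _ (by omega), ih _ (by omega), ih _ (by omega)]
    ring

/-- Jacobi matrix entries. -/
def Jf (k k' : ℕ) : ℝ :=
  if k' + 1 = k then 1 else if k' = k then s k else if k' = k + 1 then t k else 0

lemma Jf_self (k : ℕ) : Jf s t k k = s k := by simp [Jf]

lemma Jf_zero (k k' : ℕ) (h1 : k' + 1 ≠ k) (h2 : k' ≠ k) (h3 : k' ≠ k + 1) :
    Jf s t k k' = 0 := by simp [Jf, h1, h2, h3]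

lemma sumJf (N k : ℕ) (hk : k < N) (v : ℤ → ℝ) (hv0 : v (-1) = 0) :
    ∑ k' ∈ range (N+1), Jf s t k k' * v k'
      = v ((k:ℤ)-1) + s k * v k + t k * v ((k:ℤ)+1) := by
  have hsplit : ∀ k' : ℕ, Jf s t k k' * v k'
      = (if k' + 1 = k then v k' else 0) + (if k' = k then s k * v k' else 0)
        + (if k' = k + 1 then t k * v k' else 0) := by
    intro k'
    unfold Jf
    split_ifs with h1 h2 h3 <;> simp_all <;> omega
  rw [Finset.sum_congr rfl fun k' _ => hsplit k']
  rw [Finset.sum_add_distrib, Finset.sum_add_distrib]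
  congr 1
  · congr 1
    · -- down term
      cases k with
      | zero =>
        rw [Finset.sum_eq_zero (fun x _ => by simp)]
        simpa using hv0.symm
      | succ j =>
        have : ∀ k' ∈ range (N+1), (if k' + 1 = j + 1 then v k' else 0)
            = if k' = j then v k' else 0 := by
          intro k' _; split_ifs with h1 h2 <;> first | rfl | omega
        rw [Finset.sum_congr rfl this, Finset.sum_ite_eq' (range (N+1)) j]
        rw [if_pos (by simp; omega)]
        congr 1; push_cast; ring
    · rw [Finset.sum_ite_eq' (range (N+1)) k, if_pos (by simp; omega)]
  · rw [Finset.sum_ite_eq' (range (N+1)) (k+1), if_pos (by simp; omega)]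
    push_cast; ring

lemma m_one_step (N k n' : ℕ) (hk : k < N) :
    motzkinGF s t (n'+1) k = ∑ k' ∈ range (N+1), Jf s t k k' * motzkinGF s t n' k' := by
  rw [sumJf s t N k hk _ (m_neg s t n' (-1) (by omega)), m_succ]

/-- partial products of t -/
def c (k : ℕ) : ℝ := ∏ ℓ ∈ range k, t ℓ

lemma c_succ (k : ℕ) : c t (k+1) = c t k * t k := Finset.prod_range_succ t k

def S (N a b : ℕ) : ℝ := ∑ k ∈ range N, motzkinGF s t a k * c t k * motzkinGF s t b k

lemma S_swap (N a b : ℕ) (hN : a + 2 ≤ N) : S s t N (a+1) b = S s t N a (b+1) := by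
  obtain ⟨N', rfl⟩ : ∃ N', N = N' + 1 := ⟨N - 1, by omega⟩
  unfold S
  have expandL : ∀ k ∈ range (N'+1), motzkinGF s t (a+1) k * c t k * motzkinGF s t b k
      = motzkinGF s t a ((k:ℤ)-1) * c t k * motzkinGF s t b k
        + s k * (motzkinGF s t a k * c t k * motzkinGF s t b k)
        + t k * motzkinGF s t a ((k:ℤ)+1) * c t k * motzkinGF s t b k := by
    intro k _; rw [m_succ]; ring
  have expandR : ∀ k ∈ range (N'+1), motzkinGF s t a k * c t k * motzkinGF s t (b+1) k
      = motzkinGF s t a k * c t k * motzkinGF s t b ((k:ℤ)-1)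
        + s k * (motzkinGF s t a k * c t k * motzkinGF s t b k)
        + motzkinGF s t a k * c t k * t k * motzkinGF s t b ((k:ℤ)+1) := by
    intro k _; rw [m_succ s t b k]; ring
  rw [Finset.sum_congr rfl expandL, Finset.sum_congr rfl expandR]
  rw [Finset.sum_add_distrib, Finset.sum_add_distrib, Finset.sum_add_distrib,
      Finset.sum_add_distrib]
  have hT1 : ∑ k ∈ range (N'+1), motzkinGF s t a ((k:ℤ)-1) * c t k * motzkinGF s t b k
      = ∑ k ∈ range (N'+1), motzkinGF s t a k * c t k * t k * motzkinGF s t b ((k:ℤ)+1) := by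
    rw [Finset.sum_range_succ' (fun k => motzkinGF s t a ((k:ℤ)-1) * c t k * motzkinGF s t b k),
        Finset.sum_range_succ (fun k => motzkinGF s t a k * c t k * t k * motzkinGF s t b ((k:ℤ)+1))]
    simp only [Nat.cast_zero, zero_sub]
    rw [m_neg s t a (-1) (by omega)]
    rw [m_high s t a N' (by exact_mod_cast (by omega : (a:ℤ) < N'))]
    simp only [zero_mul, mul_zero, add_zero]
    refine Finset.sum_congr rfl fun k _ => ?_
    rw [c_succ]
    have h1 : ((k+1 : ℕ) : ℤ) - 1 = (k : ℤ) := by push_cast; ring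
    have h2 : ((k+1 : ℕ) : ℤ) = (k : ℤ) + 1 := by push_cast; ring
    rw [h1, h2]; ring
  have hT3 : ∑ k ∈ range (N'+1), t k * motzkinGF s t a ((k:ℤ)+1) * c t k * motzkinGF s t b k
      = ∑ k ∈ range (N'+1), motzkinGF s t a k * c t k * motzkinGF s t b ((k:ℤ)-1) := by
    rw [Finset.sum_range_succ' (fun k => motzkinGF s t a k * c t k * motzkinGF s t b ((k:ℤ)-1)),
        Finset.sum_range_succ (fun k => t k * motzkinGF s t a ((k:ℤ)+1) * c t k * motzkinGF s t b k)]
    simp only [Nat.cast_zero, zero_sub]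
    rw [m_neg s t b (-1) (by omega)]
    rw [m_high s t a ((N':ℤ)+1) (by omega)]
    simp only [zero_mul, mul_zero, add_zero, Nat.cast_zero]
    refine Finset.sum_congr rfl fun k _ => ?_
    rw [c_succ]
    have h1 : ((k+1 : ℕ) : ℤ) - 1 = (k : ℤ) := by push_cast; ring
    have h2 : ((k+1 : ℕ) : ℤ) = (k : ℤ) + 1 := by push_cast; ring
    rw [h1, h2]; ring
  rw [hT1, hT3]
  ring

lemma S_eq (N a b : ℕ) (hN : a + 1 ≤ N) : S s t N a b = motzkinGF s t (a+b) 0 := by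
  induction a generalizing b with
  | zero =>
    unfold S
    obtain ⟨N', rfl⟩ : ∃ N', N = N' + 1 := ⟨N - 1, by omega⟩
    rw [Finset.sum_range_succ' (fun k => motzkinGF s t 0 k * c t k * motzkinGF s t b k)]
    have : ∀ k ∈ range N', motzkinGF s t 0 ((k+1:ℕ)) * c t (k+1) * motzkinGF s t b ((k+1:ℕ))
        = 0 := by
      intro k _
      rw [m_high s t 0 ((k+1:ℕ)) (by push_cast; omega)]
      ring
    rw [Finset.sum_congr rfl this]
    simp [motzkinGF, c]
  | succ a ih =>
    rw [S_swap s t N a b (by omega), ih (b+1) (by omega)]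
    congr 1
    omega

lemma Jf_big (k k' : ℕ) (h : k + 2 ≤ k') : Jf s t k k' = 0 :=
  Jf_zero s t k k' (by omega) (by omega) (by omega)

/-- entries of J² -/
def J2 (k k' : ℕ) : ℝ := ∑ l ∈ range (k+2), Jf s t k l * Jf s t l k'

lemma J2_eq_big (N k k' : ℕ) (h : k + 2 ≤ N) :
    J2 s t k k' = ∑ l ∈ range N, Jf s t k l * Jf s t l k' := by
  apply Finset.sum_subset (Finset.range_subset_range.2 h)
  intro x _ hx
  rw [Jf_big s t k x (by simp at hx ⊢; omega), zero_mul]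

lemma m_one_step_trunc (n j k : ℕ) (hj : j < n) (hk : k < n) :
    motzkinGF s t (j+1) k = ∑ k' ∈ range n, Jf s t k k' * motzkinGF s t j k' := by
  obtain ⟨n', rfl⟩ : ∃ n', n = n' + 1 := ⟨n - 1, by omega⟩
  rw [m_one_step s t (n'+1) k j hk, Finset.sum_range_succ,
      m_high s t j ((n'+1 : ℕ) : ℤ) (by exact_mod_cast hj), mul_zero, add_zero]

lemma m_two_step (n j k : ℕ) (hj : j < n) (hk : k < n) :
    motzkinGF s t (j+2) k = ∑ k' ∈ range n, J2 s t k k' * motzkinGF s t j k' := by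
  rw [show j + 2 = (j+1)+1 by ring, m_one_step s t (n+1) k (j+1) (by omega)]
  have h1 : ∀ k' ∈ range (n+2), Jf s t k k' * motzkinGF s t (j+1) k'
      = ∑ k'' ∈ range (n+3), Jf s t k k' * (Jf s t k' k'' * motzkinGF s t j k'') := by
    intro k' hk'
    rw [m_one_step s t (n+2) k' j (by simp at hk'; omega), Finset.mul_sum]
  rw [Finset.sum_congr rfl h1, Finset.sum_comm]
  have h2 : ∀ k'' ∈ range (n+3), ∑ k' ∈ range (n+2), Jf s t k k' * (Jf s t k' k'' * motzkinGF s t j k'')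
      = J2 s t k k'' * motzkinGF s t j k'' := by
    intro k'' _
    rw [J2_eq_big s t (n+2) k k'' (by omega), Finset.sum_mul]
    exact Finset.sum_congr rfl fun l _ => by ring
  rw [Finset.sum_congr rfl h2]
  symm
  apply Finset.sum_subset (Finset.range_subset_range.2 (by omega))
  intro x _ hx
  rw [m_high s t j x (by simp at hx; exact_mod_cast by omega), mul_zero]

/-- lower-triangular moment matrix -/
def Mm (n : ℕ) : Matrix (Fin n) (Fin n) ℝ := Matrix.of fun i k => motzkinGF s t i k

lemma m_diag (n : ℕ) : motzkinGF s t n n = 1 := by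
  induction n with
  | zero => simp [motzkinGF]
  | succ n ih =>
    rw [m_succ]
    rw [show ((n+1:ℕ):ℤ) - 1 = (n:ℤ) by push_cast; ring, ih]
    rw [m_high s t n ((n+1:ℕ):ℤ) (by push_cast; omega),
        m_high s t n (((n+1:ℕ):ℤ)+1) (by push_cast; omega)]
    ring

lemma det_Mm (n : ℕ) : (Mm s t n).det = 1 := by
  rw [Matrix.det_of_lowerTriangular (Mm s t n)
      (fun i j hij => m_high s t i j (by exact_mod_cast hij))]
  exact Finset.prod_eq_one fun i _ => m_diag s t i

/-- entries α J + J² -/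
def Tt (α : ℝ) (k k' : ℕ) : ℝ := α * Jf s t k k' + J2 s t k k'

def Tm (α : ℝ) (n : ℕ) : Matrix (Fin n) (Fin n) ℝ := Matrix.of fun k k' => Tt s t α k k'

/-- entries of α·δ + J -/
def Af (α : ℝ) (k k' : ℕ) : ℝ := (if k' = k then α else 0) + Jf s t k k'

def Am (α : ℝ) (N : ℕ) : Matrix (Fin N) (Fin N) ℝ := Matrix.of fun k k' => Af s t α k k'

lemma succAbove_val {N : ℕ} (p : Fin (N+1)) (i : Fin N) :
    ((p.succAbove i : Fin (N+1)) : ℕ) = if (i:ℕ) < (p:ℕ) then (i:ℕ) else (i:ℕ)+1 := by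
  rw [Fin.succAbove]
  split_ifs with h1 h2 h3 <;>
    simp_all [Fin.lt_def, Fin.coe_castSucc, Fin.val_succ]

lemma det_expand_last_single {N : ℕ} (A : Matrix (Fin (N+1)) (Fin (N+1)) ℝ)
    (h : ∀ j : Fin N, A (Fin.last N) j.castSucc = 0) :
    A.det = A (Fin.last N) (Fin.last N) * (A.submatrix Fin.castSucc Fin.castSucc).det := by
  rw [Matrix.det_succ_row _ (Fin.last N), Fin.sum_univ_castSucc]
  rw [Finset.sum_eq_zero (fun j (_ : j ∈ Finset.univ) => by rw [h j]; ring), zero_add]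
  have e1 : ((Fin.last N : Fin (N+1)) : ℕ) = N := Fin.val_last _
  rw [e1]
  have : (-1:ℝ) ^ (N + N) = 1 := Even.neg_one_pow ⟨N, by ring⟩
  rw [this, one_mul]
  simp only [Fin.succAbove_last]

lemma det_expand_last_col_single {N : ℕ} (A : Matrix (Fin (N+1)) (Fin (N+1)) ℝ)
    (h : ∀ i : Fin N, A i.castSucc (Fin.last N) = 0) :
    A.det = A (Fin.last N) (Fin.last N) * (A.submatrix Fin.castSucc Fin.castSucc).det := by
  have h' : ∀ j : Fin N, A.transpose (Fin.last N) j.castSucc = 0 := fun j => h j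
  have h2 : A.transpose.submatrix Fin.castSucc Fin.castSucc
      = (A.submatrix Fin.castSucc Fin.castSucc).transpose := rfl
  rw [← Matrix.det_transpose A, det_expand_last_single A.transpose h', h2, Matrix.det_transpose]
  rfl

lemma det_expand_last_two {N : ℕ} (A : Matrix (Fin (N+2)) (Fin (N+2)) ℝ)
    (h : ∀ j : Fin N, A (Fin.last (N+1)) j.castSucc.castSucc = 0) :
    A.det = A (Fin.last (N+1)) (Fin.last (N+1)) * (A.submatrix Fin.castSucc Fin.castSucc).det
      - A (Fin.last (N+1)) ((Fin.last N).castSucc)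
        * (A.submatrix Fin.castSucc ((Fin.last N).castSucc : Fin (N+2)).succAbove).det := by
  rw [Matrix.det_succ_row _ (Fin.last (N+1)), Fin.sum_univ_castSucc, Fin.sum_univ_castSucc]
  rw [Finset.sum_eq_zero (fun j (_ : j ∈ Finset.univ) => by rw [h j]; ring), zero_add]
  have e1 : ((Fin.last (N+1) : Fin (N+2)) : ℕ) = N+1 := Fin.val_last _
  have e2 : (((Fin.last N).castSucc : Fin (N+2)) : ℕ) = N := by simp
  rw [e1, e2]
  have h1 : (-1:ℝ) ^ ((N+1) + (N+1)) = 1 := Even.neg_one_pow ⟨N+1, by ring⟩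
  have h2 : (-1:ℝ) ^ ((N+1) + N) = -1 := Odd.neg_one_pow ⟨N, by ring⟩
  rw [h1, h2]
  simp only [Fin.succAbove_last]
  ring

lemma detAm (α : ℝ) : ∀ N, (Am s t α N).det = fpoly s t α N
  | 0 => by simp [Am, Matrix.det_fin_zero, fpoly]
  | 1 => by
      rw [Matrix.det_fin_one]
      show Af s t α 0 0 = _
      simp [Af, Jf, fpoly]
  | (N+2) => by
      rw [det_expand_last_two (Am s t α (N+2)) (fun j => by
        show Af s t α (N+1) ((j:ℕ)) = 0
        have hj : (j:ℕ) < N := j.isLt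
        unfold Af
        rw [Jf_zero s t _ _ (by omega) (by omega) (by omega), if_neg (by omega), add_zero])]
      have hsub1 : (Am s t α (N+2)).submatrix Fin.castSucc Fin.castSucc = Am s t α (N+1) := by
        ext i j; rfl
      have hrow1 : Am s t α (N+2) (Fin.last (N+1)) (Fin.last (N+1)) = α + s (N+1) := by
        show Af s t α (N+1) (N+1) = _
        simp [Af, Jf]
      have hrow2 : Am s t α (N+2) (Fin.last (N+1)) ((Fin.last N).castSucc) = 1 := by
        show Af s t α (N+1) N = _
        unfold Af Jf
        rw [if_neg (by omega), if_pos (by omega)]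
        norm_num
      -- the mixed minor
      have hB : ((Am s t α (N+2)).submatrix Fin.castSucc
            ((Fin.last N).castSucc : Fin (N+2)).succAbove).det = t N * fpoly s t α N := by
        set B := (Am s t α (N+2)).submatrix Fin.castSucc
            ((Fin.last N).castSucc : Fin (N+2)).succAbove with hBdef
        have hcol : ∀ i : Fin N, B i.castSucc (Fin.last N) = 0 := by
          intro i
          show Af s t α ((i:ℕ)) ((((Fin.last N).castSucc : Fin (N+2)).succAbove (Fin.last N) : Fin (N+2)) : ℕ) = 0
          rw [succAbove_val]
          have hi : (i:ℕ) < N := i.isLt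
          simp only [Fin.val_last, Fin.coe_castSucc, lt_self_iff_false, if_false]
          unfold Af
          rw [Jf_zero s t _ _ (by omega) (by omega) (by omega), if_neg (by omega), add_zero]
        rw [det_expand_last_col_single B hcol]
        have hBl : B (Fin.last N) (Fin.last N) = t N := by
          show Af s t α N ((((Fin.last N).castSucc : Fin (N+2)).succAbove (Fin.last N) : Fin (N+2)) : ℕ) = _
          rw [succAbove_val]
          simp only [Fin.val_last, Fin.coe_castSucc, lt_self_iff_false, if_false]
          unfold Af Jf
          rw [if_neg (by omega), if_neg (by omega), if_neg (by omega), if_pos (by omega)]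
          simp
        have hBsub : B.submatrix Fin.castSucc Fin.castSucc = Am s t α N := by
          ext i j
          show Af s t α ((i:ℕ)) ((((Fin.last N).castSucc : Fin (N+2)).succAbove j.castSucc : Fin (N+2)) : ℕ) = _
          rw [succAbove_val]
          have hj : (j:ℕ) < N := j.isLt
          rw [if_pos (by simpa using hj)]
          rfl
        rw [hBl, hBsub, detAm α N]
      rw [hsub1, hrow1, hrow2, hB, detAm α (N+1)]
      show _ = (α + s (N+1)) * fpoly s t α (N+1) - t N * fpoly s t α N
      ring

lemma Af_zero_eq (k l : ℕ) : Af s t 0 k l = Jf s t k l := by simp [Af]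

lemma Pentry (α : ℝ) (N : ℕ) (k k' : Fin N) :
    (Am s t 0 N * Am s t α N) k k'
      = α * Jf s t k k' + ∑ l ∈ range N, Jf s t (k:ℕ) l * Jf s t l (k':ℕ) := by
  rw [Matrix.mul_apply]
  have h1 : ∀ l : Fin N, Am s t 0 N k l * Am s t α N l k'
      = (if k' = l then Jf s t (k:ℕ) (l:ℕ) * α else 0)
          + Jf s t (k:ℕ) (l:ℕ) * Jf s t (l:ℕ) (k':ℕ) := by
    intro l
    show Af s t 0 (k:ℕ) (l:ℕ) * Af s t α (l:ℕ) (k':ℕ) = _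
    rw [Af_zero_eq]
    unfold Af
    by_cases h : k' = l
    · rw [if_pos h, if_pos (by rw [h]), mul_add]
    · rw [if_neg h, if_neg (fun hc => h (Fin.ext hc)), zero_add]
      exact (zero_add _).symm
  rw [Finset.sum_congr rfl fun l _ => h1 l, Finset.sum_add_distrib]
  rw [Finset.sum_ite_eq Finset.univ k'
      (fun l : Fin N => Jf s t (k:ℕ) (l:ℕ) * α), if_pos (Finset.mem_univ k')]
  rw [Fin.sum_univ_eq_sum_range (fun l => Jf s t (k:ℕ) l * Jf s t l (k':ℕ)) N]
  ring_nf

lemma Tt_corner (α : ℝ) (n : ℕ) (k k' : Fin (n+1)) :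
    Tm s t α (n+1) k k' = (Am s t 0 (n+1) * Am s t α (n+1)) k k'
      + (if (k:ℕ) = n ∧ (k':ℕ) = n then t n else 0) := by
  rw [Pentry]
  show Tt s t α (k:ℕ) (k':ℕ) = _
  unfold Tt
  by_cases hk : (k:ℕ) < n
  · rw [J2_eq_big s t (n+1) (k:ℕ) (k':ℕ) (by omega)]
    rw [if_neg (by omega)]
    ring
  · have hk' : (k:ℕ) = n := by have := k.isLt; omega
    have hJ2 : J2 s t (k:ℕ) (k':ℕ) = ∑ l ∈ range (n+1), Jf s t (k:ℕ) l * Jf s t l (k':ℕ)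
        + (if (k':ℕ) = n then t n else 0) := by
      rw [J2_eq_big s t (n+2) (k:ℕ) (k':ℕ) (by omega), Finset.sum_range_succ]
      congr 1
      rw [hk']
      unfold Jf
      rw [if_neg (by omega), if_neg (by omega), if_pos rfl]
      have hlt := k'.isLt
      by_cases h : (k':ℕ) = n
      · rw [if_pos (by omega), mul_one, if_pos h]
      · rw [if_neg (by omega), if_neg (by omega), if_neg (by omega), if_neg h, mul_zero]
    rw [hJ2, hk']
    by_cases h : (k':ℕ) = n
    · rw [if_pos h, if_pos ⟨rfl, h⟩]; ring
    · rw [if_neg h, if_neg (by tauto)]; ring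

lemma detTm (α : ℝ) : ∀ n, (Tm s t α n).det
    = ∑ j ∈ Finset.range (n+1), fpoly s t α j * fpoly s t 0 j * ∏ ℓ ∈ Finset.Ico j n, t ℓ
  | 0 => by simp [Tm, Matrix.det_fin_zero, fpoly]
  | (n+1) => by
    have hR : ∑ j ∈ range (n+2), fpoly s t α j * fpoly s t 0 j * ∏ ℓ ∈ Finset.Ico j (n+1), t ℓ
        = t n * (∑ j ∈ range (n+1), fpoly s t α j * fpoly s t 0 j * ∏ ℓ ∈ Finset.Ico j n, t ℓ)
          + fpoly s t α (n+1) * fpoly s t 0 (n+1) := by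
      rw [Finset.sum_range_succ, Finset.Ico_self, Finset.prod_empty, mul_one, Finset.mul_sum]
      congr 1
      refine Finset.sum_congr rfl fun j hj => ?_
      rw [Finset.prod_Ico_succ_top (by simp at hj; omega)]
      ring
    rw [hR]
    have hsplit : Tm s t α (n+1) = (Am s t 0 (n+1) * Am s t α (n+1)).updateRow (Fin.last n)
        ((Am s t 0 (n+1) * Am s t α (n+1)) (Fin.last n)
          + t n • (fun k'' : Fin (n+1) => if k'' = Fin.last n then (1:ℝ) else 0)) := by
      ext k k'
      by_cases hk : k = Fin.last n
      · subst hk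
        rw [Matrix.updateRow_self, Tt_corner]
        have hval : ((Fin.last n : Fin (n+1)) : ℕ) = n := Fin.val_last n
        by_cases h : (k':ℕ) = n
        · have hk2 : k' = Fin.last n := Fin.ext (by rw [hval, h])
          rw [if_pos ⟨hval, h⟩]
          simp [hk2]
        · have hk2 : k' ≠ Fin.last n := fun hc => h (by rw [hc, hval])
          rw [if_neg (by tauto)]
          simp [hk2]
      · rw [Matrix.updateRow_ne hk, Tt_corner]
        have hkn : (k:ℕ) ≠ n := fun hc => hk (Fin.ext (by simp [hc]))
        rw [if_neg (by tauto), add_zero]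
    rw [hsplit, Matrix.det_updateRow_add, Matrix.updateRow_eq_self,
        Matrix.det_updateRow_smul, Matrix.det_mul, detAm s t 0 (n+1), detAm s t α (n+1)]
    have hE : ((Am s t 0 (n+1) * Am s t α (n+1)).updateRow (Fin.last n)
          (fun k'' : Fin (n+1) => if k'' = Fin.last n then (1:ℝ) else 0)).det
        = (Tm s t α n).det := by
      rw [det_expand_last_single _ (fun j => by
        rw [Matrix.updateRow_self]
        exact if_neg (Fin.ne_last_of_lt (Fin.castSucc_lt_last j)))]
      rw [Matrix.updateRow_self, if_pos rfl, one_mul]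
      congr 1
      ext i j
      rw [Matrix.submatrix_apply, Matrix.updateRow_ne (Fin.ne_last_of_lt (Fin.castSucc_lt_last i)),
          Pentry]
      show _ = Tt s t α (i:ℕ) (j:ℕ)
      unfold Tt
      rw [J2_eq_big s t (n+1) (i:ℕ) (j:ℕ) (by have := i.isLt; omega)]
      simp only [Fin.coe_castSucc]
    rw [hE, detTm α n]
    ring

lemma key_entry (α : ℝ) (n i j : ℕ) (hi : i < n) (hj : j < n) :
    α * motzkinGF s t (i+j+1) 0 + motzkinGF s t (i+j+2) 0
      = ∑ k ∈ range n, ∑ k' ∈ range n,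
          motzkinGF s t i k * (c t k * Tt s t α k k') * motzkinGF s t j k' := by
  have inner : ∀ k ∈ range n,
      ∑ k' ∈ range n, motzkinGF s t i k * (c t k * Tt s t α k k') * motzkinGF s t j k'
        = α * (motzkinGF s t i k * c t k * motzkinGF s t (j+1) k)
          + motzkinGF s t i k * c t k * motzkinGF s t (j+2) k := by
    intro k hk
    have hk' : k < n := by simpa using hk
    rw [m_one_step_trunc s t n j k hj hk', m_two_step s t n j k hj hk']
    have expand : ∀ k' ∈ range n,
        motzkinGF s t i k * (c t k * Tt s t α k k') * motzkinGF s t j k'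
          = α * (motzkinGF s t i k * c t k * (Jf s t k k' * motzkinGF s t j k'))
            + (motzkinGF s t i k * c t k) * (J2 s t k k' * motzkinGF s t j k') := by
      intro k' _
      unfold Tt
      ring
    rw [Finset.sum_congr rfl expand, Finset.sum_add_distrib, ← Finset.mul_sum, ← Finset.mul_sum,
        ← Finset.mul_sum]
  rw [Finset.sum_congr rfl inner, Finset.sum_add_distrib, ← Finset.mul_sum]
  have h1 : ∑ k ∈ range n, motzkinGF s t i k * c t k * motzkinGF s t (j+1) k
      = motzkinGF s t (i+j+1) 0 := by
    have := S_eq s t n i (j+1) (by omega)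
    unfold S at this
    rw [this]
    congr 1
  have h2 : ∑ k ∈ range n, motzkinGF s t i k * c t k * motzkinGF s t (j+2) k
      = motzkinGF s t (i+j+2) 0 := by
    have := S_eq s t n i (j+2) (by omega)
    unfold S at this
    rw [this]
    congr 1
  rw [h1, h2]

lemma sum_fin_conv (n : ℕ) (F : ℕ → ℕ → ℝ) :
    ∑ k : Fin n, ∑ k' : Fin n, F (k:ℕ) (k':ℕ) = ∑ k ∈ range n, ∑ k' ∈ range n, F k k' := by
  calc ∑ k : Fin n, ∑ k' : Fin n, F (k:ℕ) (k':ℕ)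
      = ∑ k : Fin n, ∑ k' ∈ range n, F (k:ℕ) k' :=
        Finset.sum_congr rfl fun k _ => Fin.sum_univ_eq_sum_range (F (k:ℕ)) n
    _ = ∑ k ∈ range n, ∑ k' ∈ range n, F k k' :=
        Fin.sum_univ_eq_sum_range (fun k => ∑ k' ∈ range n, F k k') n

lemma A_fact (α : ℝ) (n : ℕ) :
    (Matrix.of fun i j : Fin n =>
        α * motzkinGF s t ((i : ℕ) + (j : ℕ) + 1) 0 + motzkinGF s t ((i : ℕ) + (j : ℕ) + 2) 0)
      = Mm s t n * (Matrix.of fun k k' : Fin n => c t (k:ℕ) * Tt s t α (k:ℕ) (k':ℕ))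
          * (Mm s t n).transpose := by
  ext i j
  show α * motzkinGF s t ((i : ℕ) + (j : ℕ) + 1) 0 + motzkinGF s t ((i : ℕ) + (j : ℕ) + 2) 0 = _
  rw [Matrix.mul_apply]
  have hstep : ∀ k' : Fin n,
      (Mm s t n * (Matrix.of fun k k' : Fin n => c t (k:ℕ) * Tt s t α (k:ℕ) (k':ℕ))) i k'
        * (Mm s t n).transpose k' j
      = ∑ k : Fin n, motzkinGF s t i (k:ℕ) * (c t (k:ℕ) * Tt s t α (k:ℕ) (k':ℕ))
          * motzkinGF s t j (k':ℕ) := by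
    intro k'
    rw [Matrix.mul_apply, Finset.sum_mul, Matrix.transpose_apply]
    rfl
  rw [Finset.sum_congr rfl fun k' _ => hstep k', Finset.sum_comm,
      sum_fin_conv n (fun k k' => motzkinGF s t i k * (c t k * Tt s t α k k') * motzkinGF s t j k')]
  exact key_entry s t α n i j i.isLt j.isLt

lemma H_fact (n : ℕ) :
    (Matrix.of fun i j : Fin n => motzkinGF s t ((i : ℕ) + (j : ℕ)) 0)
      = Mm s t n * Matrix.diagonal (fun k : Fin n => c t (k:ℕ)) * (Mm s t n).transpose := by
  ext i j
  show motzkinGF s t ((i : ℕ) + (j : ℕ)) 0 = _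
  rw [Matrix.mul_apply]
  have : ∀ k : Fin n, (Mm s t n * Matrix.diagonal (fun k : Fin n => c t (k:ℕ))) i k
      * (Mm s t n).transpose k j
      = motzkinGF s t i k * c t k * motzkinGF s t j k := by
    intro k
    rw [Matrix.mul_diagonal, Matrix.transpose_apply]
    rfl
  rw [Finset.sum_congr rfl fun k _ => this k,
      Fin.sum_univ_eq_sum_range (fun k => motzkinGF s t i k * c t k * motzkinGF s t j k) n]
  exact (S_eq s t n i j i.isLt).symm

end HA

/-- Eq. (3.1): for `n ≥ 1` and real `α`,
`det(α m_{i+j+1} + m_{i+j+2})_{i,j=0}^{n-1}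
  = (∑_{j=0}^{n} f_j(α) f_j(0) ∏_{ℓ=j}^{n-1} t_ℓ) · det(m_{i+j})_{i,j=0}^{n-1}`. -/
theorem hankel_shifted_two_term_moments (s t : ℕ → ℝ) (ht : ∀ n, t n ≠ 0)
    (n : ℕ) (hn : 0 < n) (α : ℝ) :
    Matrix.det (Matrix.of fun i j : Fin n =>
        α * motzkinGF s t ((i : ℕ) + (j : ℕ) + 1) 0
          + motzkinGF s t ((i : ℕ) + (j : ℕ) + 2) 0)
      = (∑ j ∈ Finset.range (n + 1),
            fpoly s t α j * fpoly s t 0 j * ∏ ℓ ∈ Finset.Ico j n, t ℓ)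
        * Matrix.det (Matrix.of fun i j : Fin n =>
            motzkinGF s t ((i : ℕ) + (j : ℕ)) 0) := by
  rw [HA.A_fact s t α n, HA.H_fact s t n]
  have hX : (Matrix.of fun k k' : Fin n => HA.c t (k:ℕ) * HA.Tt s t α (k:ℕ) (k':ℕ))
      = Matrix.diagonal (fun k : Fin n => HA.c t (k:ℕ)) * HA.Tm s t α n := by
    ext k k'
    rw [Matrix.diagonal_mul]
    rfl
  rw [hX]
  simp only [Matrix.det_mul, Matrix.det_transpose, HA.det_Mm, Matrix.det_diagonal,
    HA.detTm s t α n, one_mul, mul_one]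
  ring
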